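/- For positive reals a, b with a ≠ b, √(L(a,b)·I(a,b)) < ((√a + √b)/2)², i.e. the geometric mean of the logarithmic and identric means is less than the power mean of order 1/2. -/

import Mathlib

/-!
Writing `a = e^(m - x)`, `b = e^(m + x)` with `x ≠ 0`, each of the three means is `e^m` times a
function of `x` alone: `L = e^m sinh x / x`, `I = e^m exp (x coth x - 1)` and
`M_{1/2} = e^m (cosh x + 1) / 2`. So the claim is that `g(x) = log (M_{1/2}² / (L I))` is positive.
The function `g` is even, tends to `0` as `x → 0⁺`, and has derivative
`(sinh x - x)² / (x sinh² x) > 0` for `x > 0`.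
-/

open Real Filter Set Topology

theorem lt_of_strictMonoOn_Ioi_of_tendsto {α β : Type*} [LinearOrder α] [TopologicalSpace α]
    [OrderTopology α] [DenselyOrdered α] [TopologicalSpace β] [Preorder β]
    [OrderClosedTopology β] {f : α → β} {a x : α} {l : β} (hf : StrictMonoOn f (Ioi a))
    (hl : Tendsto f (𝓝[>] a) (𝓝 l)) (hx : a < x) : l < f x := by
  obtain ⟨y, hay, hyx⟩ := exists_between hx
  have : NeBot (𝓝[>] a) := nhdsGT_neBot_of_exists_gt ⟨x, hx⟩
  have hly : l ≤ f y := by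
    refine le_of_tendsto hl ?_
    filter_upwards [Ioo_mem_nhdsGT hay] with z hz
    exact (hf hz.1 hay hz.2).le
  exact hly.trans_lt (hf hay (hay.trans hyx) hyx)

theorem exp_add_sub_exp_sub (m x : ℝ) : exp (m + x) - exp (m - x) = 2 * exp m * sinh x := by
  rw [sinh_eq, exp_add, exp_sub, exp_neg]
  field_simp

theorem exp_add_add_exp_sub (m x : ℝ) : exp (m + x) + exp (m - x) = 2 * exp m * cosh x := by
  rw [cosh_eq, exp_add, exp_sub, exp_neg]
  field_simp

theorem tendsto_sinh_div_self : Tendsto (fun x => sinh x / x) (𝓝[≠] 0) (𝓝 1) := by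
  have := (hasDerivAt_sinh 0).tendsto_slope_zero
  simpa [cosh_zero, sinh_zero, div_eq_inv_mul] using this

-- `log (M_{1/2}(a, b)² / (L(a, b) I(a, b)))` at `(a, b) = (exp (-x), exp x)`.
noncomputable def meanGap (x : ℝ) : ℝ :=
  2 * log ((cosh x + 1) / 2) - log (sinh x / x) - (x * cosh x / sinh x - 1)

theorem hasDerivAt_meanGap {x : ℝ} (hx : 0 < x) :
    HasDerivAt meanGap ((sinh x - x) ^ 2 / (x * sinh x ^ 2)) x := by
  have hs : 0 < sinh x := sinh_pos_iff.2 hx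
  have hM : HasDerivAt (fun y => (cosh y + 1) / 2) (sinh x / 2) x :=
    ((hasDerivAt_cosh x).add_const 1).div_const 2
  have hL : HasDerivAt (fun y => sinh y / y) ((cosh x * x - sinh x * 1) / x ^ 2) x :=
    (hasDerivAt_sinh x).div (hasDerivAt_id x) hx.ne'
  have hI : HasDerivAt (fun y => y * cosh y / sinh y)
      (((1 * cosh x + x * sinh x) * sinh x - x * cosh x * cosh x) / sinh x ^ 2) x :=
    ((hasDerivAt_id x).mul (hasDerivAt_cosh x)).div (hasDerivAt_sinh x) hs.ne'
  refine HasDerivAt.congr_deriv (f := meanGap)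
    ((((hM.log (by positivity)).const_mul 2).sub (hL.log (by positivity))).sub (hI.sub_const 1)) ?_
  field_simp
  linear_combination (x ^ 2 * cosh x + x ^ 2 - 2 * sinh x * x) * cosh_sq x

theorem tendsto_meanGap : Tendsto meanGap (𝓝[>] 0) (𝓝 0) := by
  unfold meanGap
  have hL := tendsto_sinh_div_self.mono_left (nhdsGT_le_nhdsNE 0)
  have hcosh : Tendsto (fun x => cosh x) (𝓝[>] 0) (𝓝 1) :=
    (continuous_cosh.tendsto' 0 1 cosh_zero).mono_left nhdsWithin_le_nhds
  have hI : Tendsto (fun x => x * cosh x / sinh x) (𝓝[>] 0) (𝓝 1) := by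
    simpa only [Pi.div_def, div_div_eq_mul_div, mul_comm, div_one] using hcosh.div hL one_ne_zero
  have := ((((hcosh.add_const 1).div_const 2).log (by norm_num)).const_mul 2).sub
    (hL.log one_ne_zero) |>.sub (hI.sub_const 1)
  simpa using this

theorem meanGap_pos {x : ℝ} (hx : 0 < x) : 0 < meanGap x := by
  refine lt_of_strictMonoOn_Ioi_of_tendsto ?_ tendsto_meanGap hx
  refine strictMonoOn_of_deriv_pos (convex_Ioi 0)
    (fun y hy => (hasDerivAt_meanGap hy).continuousAt.continuousWithinAt) fun y hy => ?_
  rw [interior_Ioi] at hy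
  rw [(hasDerivAt_meanGap hy).deriv]
  have : 0 < y := hy
  have : 0 < sinh y := sinh_pos_iff.2 hy
  have : 0 < sinh y - y := sub_pos.2 (self_lt_sinh_iff.2 hy)
  positivity

theorem meanGap_neg (x : ℝ) : meanGap (-x) = meanGap x := by
  simp only [meanGap, sinh_neg, cosh_neg, neg_mul, neg_div_neg_eq]

theorem meanGap_pos_of_ne_zero {x : ℝ} (hx : x ≠ 0) : 0 < meanGap x := by
  rcases hx.lt_or_gt with hx | hx
  · simpa [meanGap_neg] using meanGap_pos (neg_pos.2 hx)
  · exact meanGap_pos hx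

theorem sinh_div_self_mul_exp_lt {x : ℝ} (hx : x ≠ 0) :
    sinh x / x * exp (x * cosh x / sinh x - 1) < ((cosh x + 1) / 2) ^ 2 := by
  have hL : 0 < sinh x / x := by
    rcases hx.lt_or_gt with hx | hx
    · exact div_pos_of_neg_of_neg (sinh_neg_iff.2 hx) hx
    · exact div_pos (sinh_pos_iff.2 hx) hx
  have hgap := meanGap_pos_of_ne_zero hx
  rw [meanGap] at hgap
  have hlog : log (sinh x / x * exp (x * cosh x / sinh x - 1)) < log (((cosh x + 1) / 2) ^ 2) := by
    rw [log_mul hL.ne' (exp_pos _).ne', log_exp, log_pow]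
    push_cast
    linarith
  exact (log_lt_log_iff (by positivity) (by positivity)).1 hlog

noncomputable def logMean (a b : ℝ) : ℝ := (b - a) / (log b - log a)

noncomputable def identricMean (a b : ℝ) : ℝ := (1 / exp 1) * (b ^ b / a ^ a) ^ (1 / (b - a))

noncomputable def powerMeanHalf (a b : ℝ) : ℝ := ((√a + √b) / 2) ^ 2

theorem logMean_exp_sub_exp_add (m : ℝ) {x : ℝ} (hx : x ≠ 0) :
    logMean (exp (m - x)) (exp (m + x)) = exp m * (sinh x / x) := by
  rw [logMean, exp_add_sub_exp_sub, log_exp, log_exp, show m + x - (m - x) = 2 * x by ring]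
  field_simp

theorem identricMean_exp_sub_exp_add (m : ℝ) {x : ℝ} (hx : x ≠ 0) :
    identricMean (exp (m - x)) (exp (m + x)) = exp m * exp (x * cosh x / sinh x - 1) := by
  have hs : sinh x ≠ 0 := sinh_ne_zero.2 hx
  have hexponent : ((m + x) * exp (m + x) - (m - x) * exp (m - x)) * (1 / (2 * exp m * sinh x)) =
      m + x * cosh x / sinh x := by
    rw [show (m + x) * exp (m + x) - (m - x) * exp (m - x) =
        m * (exp (m + x) - exp (m - x)) + x * (exp (m + x) + exp (m - x)) by ring,
      exp_add_sub_exp_sub, exp_add_add_exp_sub]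
    field_simp
  rw [identricMean, exp_add_sub_exp_sub, ← exp_mul, ← exp_mul, ← exp_sub, ← exp_mul, hexponent,
    one_div, ← exp_neg, ← exp_add, ← exp_add]
  ring_nf

theorem powerMeanHalf_exp_sub_exp_add (m x : ℝ) :
    powerMeanHalf (exp (m - x)) (exp (m + x)) = exp m * ((cosh x + 1) / 2) := by
  have hprod : √(exp (m - x)) * √(exp (m + x)) = exp m := by
    rw [← exp_half, ← exp_half, ← exp_add]
    ring_nf
  rw [powerMeanHalf, div_pow, add_sq, sq_sqrt (exp_pos _).le, sq_sqrt (exp_pos _).le, mul_assoc,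
    hprod]
  linear_combination exp_add_add_exp_sub m x / 4

theorem exists_eq_exp_sub_exp_add {a b : ℝ} (ha : 0 < a) (hb : 0 < b) (hab : a ≠ b) :
    ∃ m x : ℝ, x ≠ 0 ∧ a = exp (m - x) ∧ b = exp (m + x) := by
  refine ⟨(log a + log b) / 2, (log b - log a) / 2, ?_, ?_, ?_⟩
  · rw [div_ne_zero_iff, sub_ne_zero]
    exact ⟨fun h => hab (log_injOn_pos ha hb h.symm), two_ne_zero⟩
  · rw [show (log a + log b) / 2 - (log b - log a) / 2 = log a by ring, exp_log ha]
  · rw [show (log a + log b) / 2 + (log b - log a) / 2 = log b by ring, exp_log hb]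

theorem sqrt_LI_lt_powerMean_half (a b : ℝ) (ha : 0 < a) (hb : 0 < b) (hab : a ≠ b) :
    Real.sqrt (((b - a) / (Real.log b - Real.log a)) *
        ((1 / Real.exp 1) * (b ^ b / a ^ a) ^ (1 / (b - a)))) <
      ((Real.sqrt a + Real.sqrt b) / 2) ^ 2 := by
  change √(logMean a b * identricMean a b) < powerMeanHalf a b
  obtain ⟨m, x, hx, rfl, rfl⟩ := exists_eq_exp_sub_exp_add ha hb hab
  rw [logMean_exp_sub_exp_add m hx, identricMean_exp_sub_exp_add m hx,
    powerMeanHalf_exp_sub_exp_add, sqrt_lt' (by positivity)]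
  calc exp m * (sinh x / x) * (exp m * exp (x * cosh x / sinh x - 1))
      = exp m ^ 2 * (sinh x / x * exp (x * cosh x / sinh x - 1)) := by ring
    _ < exp m ^ 2 * ((cosh x + 1) / 2) ^ 2 := by gcongr; exact sinh_div_self_mul_exp_lt hx
    _ = (exp m * ((cosh x + 1) / 2)) ^ 2 := by ring
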